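/- Let n ≥ 2, δ > 2 log n, and let a, b ∈ ℝⁿ be strictly decreasing vectors with a₁ − a₂ > δ (in fact a_i − a_j > δ for all i < j) and a₁ − b₁ > δ. Then Boltz(a) − Boltz(b) > δ / (1 + (n − 1) e^{−δ}) ≥ log n; in particular Boltz(a) − Boltz(b) > (log n)² e^{−(a₁ − b₁)}. -/

import Mathlib

open scoped BigOperators Classical
open Matrix

noncomputable section

def softmax {n : ℕ} (a : Fin n → ℝ) : Fin n → ℝ :=
  fun i => Real.exp (a i) / ∑ j, Real.exp (a j)

def boltz {n : ℕ} (a : Fin n → ℝ) : ℝ := ∑ i, a i * softmax a i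

def argmaxSet {n : ℕ} (a : Fin n → ℝ) : Finset (Fin n) :=
  Finset.univ.filter (fun i => ∀ j, a j ≤ a i)

def hardmax {n : ℕ} (a : Fin n → ℝ) : Fin n → ℝ :=
  fun i => if i ∈ argmaxSet a then (1 : ℝ) / (argmaxSet a).card else 0

def softmaxCols {n m : ℕ} (A : Matrix (Fin n) (Fin m) ℝ) : Matrix (Fin n) (Fin m) ℝ :=
  Matrix.of fun i k => softmax (fun j => A j k) i

def hardmaxCols {n m : ℕ} (A : Matrix (Fin n) (Fin m) ℝ) : Matrix (Fin n) (Fin m) ℝ :=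
  Matrix.of fun i k => hardmax (fun j => A j k) i

def attnS {d n s : ℕ} (WO : Matrix (Fin d) (Fin s) ℝ)
    (WV WK WQ : Matrix (Fin s) (Fin d) ℝ) (Z : Matrix (Fin d) (Fin n) ℝ) :
    Matrix (Fin d) (Fin n) ℝ :=
  Z + WO * (WV * Z) * softmaxCols ((WK * Z)ᵀ * (WQ * Z))

def attnH {d n s h : ℕ} (WO : Fin h → Matrix (Fin d) (Fin s) ℝ)
    (WV WK WQ : Fin h → Matrix (Fin s) (Fin d) ℝ) (Z : Matrix (Fin d) (Fin n) ℝ) :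
    Matrix (Fin d) (Fin n) ℝ :=
  Z + ∑ i, WO i * (WV i * Z) * hardmaxCols ((WK i * Z)ᵀ * (WQ i * Z))

def l2norm {d : ℕ} (x : Fin d → ℝ) : ℝ := Real.sqrt (∑ t, (x t) ^ 2)

def TokSep {d n N : ℕ} (rmin rmax δ : ℝ) (X : Fin N → Matrix (Fin d) (Fin n) ℝ) : Prop :=
  (∀ i k, rmin < l2norm (fun t => X i t k)) ∧
  (∀ i k, l2norm (fun t => X i t k) < rmax) ∧
  (∀ i j k l, (fun t => X i t k) ≠ (fun t => X j t l) →
    δ < l2norm (fun t => X i t k - X j t l))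

def vocab {d n : ℕ} (X : Matrix (Fin d) (Fin n) ℝ) : Finset (Fin d → ℝ) :=
  Finset.image (fun k => (fun t => X t k)) Finset.univ

def ContextualMapping {d n N : ℕ} (X : Fin N → Matrix (Fin d) (Fin n) ℝ)
    (q : Matrix (Fin d) (Fin n) ℝ → Matrix (Fin d) (Fin n) ℝ) (r δ : ℝ) : Prop :=
  (∀ i k, l2norm (fun t => q (X i) t k) < r) ∧
  (∀ i j k l, (vocab (X i) ≠ vocab (X j) ∨ (fun t => X i t k) ≠ (fun t => X j t l)) →
    δ < l2norm (fun t => q (X i) t k - q (X j) t l))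

def ffn {d n q : ℕ} (W1 : Matrix (Fin q) (Fin d) ℝ) (W2 : Matrix (Fin d) (Fin q) ℝ)
    (b1 : Fin q → ℝ) (b2 : Fin d → ℝ) (H : Matrix (Fin d) (Fin n) ℝ) :
    Matrix (Fin d) (Fin n) ℝ :=
  Matrix.of fun t k =>
    H t k + W2.mulVec (fun u => max 0 (W1.mulVec (fun t' => H t' k) u + b1 u)) t + b2 t

def logSumExp {n : ℕ} (a : Fin n → ℝ) : ℝ := Real.log (∑ i, Real.exp (a i))

def entS {n : ℕ} (p : Fin n → ℝ) : ℝ := -∑ i, p i * Real.log (p i)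

/-! Write `t_j = a_1 - a_j ≥ δ` for `j ≥ 2` and `x = (n - 1) e^{-δ}`. Since
`a_1 - Boltz(a) = Σ_j t_j e^{-t_j} / Σ_j e^{-t_j}`, the bound `a_1 - Boltz(a) ≤ δ x / (1 + x)`
reduces, term by term, to `((1 + x) t - δ x) e^{-t} ≤ δ e^{-δ}` for `t ≥ δ`, which holds as soon
as `1 + x ≤ δ` (the left side is decreasing in `t` and equality holds at `t = δ`). Together with
`Boltz(b) ≤ b_1` and `a_1 - b_1 > δ` this gives `Boltz(a) - Boltz(b) > δ - δ x / (1 + x) = δ / (1 + x)`.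
The assumption `δ > 2 log n` makes `e^{-δ} < 1 / n²`, hence `x ≤ 1 / 4`, which yields the
remaining two bounds. -/

open Real Finset

lemma sum_exp_pos {n : ℕ} (a : Fin n → ℝ) (i : Fin n) : 0 < ∑ j, exp (a j) :=
  Finset.sum_pos (fun _ _ => exp_pos _) ⟨i, mem_univ i⟩

lemma boltz_le_of_forall_le {n : ℕ} (b : Fin n → ℝ) (i : Fin n) (h : ∀ j, b j ≤ b i) :
    boltz b ≤ b i := by
  have hS := sum_exp_pos b i
  unfold boltz softmax
  calc ∑ j, b j * (exp (b j) / ∑ k, exp (b k))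
      ≤ ∑ j, b i * (exp (b j) / ∑ k, exp (b k)) :=
        sum_le_sum fun j _ => mul_le_mul_of_nonneg_right (h j) (by positivity)
    _ = b i := by rw [← mul_sum, ← sum_div, div_self hS.ne', mul_one]

lemma sub_boltz_eq {n : ℕ} (a : Fin n → ℝ) (i : Fin n) :
    a i - boltz a = (∑ j, (a i - a j) * exp (a j)) / ∑ j, exp (a j) := by
  have hS := sum_exp_pos a i
  rw [eq_div_iff hS.ne', sub_mul, mul_sum]
  simp only [sub_mul, sum_sub_distrib, boltz, softmax, sum_mul, mul_assoc,
    div_mul_cancel₀ _ hS.ne']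

lemma mul_exp_neg_le_of_le {x δ t : ℝ} (hx : 0 ≤ x) (hδ : 1 + x ≤ δ) (ht : δ ≤ t) :
    ((1 + x) * t - δ * x) * exp (-t) ≤ δ * exp (-δ) := by
  have hlin : (1 + x) * t - δ * x ≤ δ * exp (t - δ) :=
    calc (1 + x) * t - δ * x = δ + (1 + x) * (t - δ) := by ring
      _ ≤ δ + δ * (t - δ) := by nlinarith
      _ = δ * (t - δ + 1) := by ring
      _ ≤ δ * exp (t - δ) := mul_le_mul_of_nonneg_left (add_one_le_exp _) (by linarith)
  calc ((1 + x) * t - δ * x) * exp (-t) ≤ δ * exp (t - δ) * exp (-t) :=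
        mul_le_mul_of_nonneg_right hlin (exp_pos _).le
    _ = δ * exp (-δ) := by rw [mul_assoc, ← exp_add]; ring_nf

lemma sub_boltz_le {n : ℕ} (a : Fin n → ℝ) (i : Fin n) {δ : ℝ}
    (hδ : 1 + (n - 1) * exp (-δ) ≤ δ) (hgap : ∀ j ≠ i, δ ≤ a i - a j) :
    a i - boltz a ≤ δ * ((n - 1) * exp (-δ)) / (1 + (n - 1) * exp (-δ)) := by
  set x := ((n : ℝ) - 1) * exp (-δ)
  have hn : (1 : ℝ) ≤ n := by exact_mod_cast i.pos
  have hx : 0 ≤ x := mul_nonneg (by linarith) (exp_pos _).le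
  have hterm : ∀ j ∈ univ.erase i,
      ((1 + x) * (a i - a j) - δ * x) * exp (a j) ≤ δ * exp (-δ) * exp (a i) := by
    intro j hj
    have hexp : exp (a j) = exp (-(a i - a j)) * exp (a i) := by rw [← exp_add]; ring_nf
    rw [hexp, ← mul_assoc]
    exact mul_le_mul_of_nonneg_right
      (mul_exp_neg_le_of_le hx hδ (hgap j (ne_of_mem_erase hj))) (exp_pos _).le
  -- the `n - 1` bounds `δ e^{-δ} e^{a_i}` add up to `δ x e^{a_i}`, cancelled by the `i`-th term
  have hsum : ∑ j, ((1 + x) * (a i - a j) - δ * x) * exp (a j) ≤ 0 := by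
    have hcard : ((univ.erase i).card : ℝ) = n - 1 := by
      rw [card_erase_of_mem (mem_univ i), card_univ, Fintype.card_fin,
        Nat.cast_sub (by exact_mod_cast hn), Nat.cast_one]
    rw [← add_sum_erase _ _ (mem_univ i)]
    have hrest := sum_le_card_nsmul _ _ _ hterm
    rw [nsmul_eq_mul, hcard] at hrest
    nlinarith
  have hexpand : ∑ j, ((1 + x) * (a i - a j) - δ * x) * exp (a j)
      = (1 + x) * ∑ j, (a i - a j) * exp (a j) - δ * x * ∑ j, exp (a j) := by
    rw [mul_sum, mul_sum, ← sum_sub_distrib]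
    exact sum_congr rfl fun j _ => by ring
  rw [sub_boltz_eq, div_le_div_iff₀ (sum_exp_pos a i) (by linarith)]
  linarith

lemma exp_neg_lt_inv_sq {y δ : ℝ} (hy : 0 < y) (hδ : 2 * log y < δ) : exp (-δ) < (y ^ 2)⁻¹ := by
  calc exp (-δ) < exp (-(2 * log y)) := exp_lt_exp.2 (by linarith)
    _ = (y ^ 2)⁻¹ := by rw [exp_neg, two_mul, exp_add, exp_log hy, sq]

lemma sub_one_mul_exp_neg_le_quarter {y δ : ℝ} (hy : 1 ≤ y) (hδ : 2 * log y < δ) :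
    (y - 1) * exp (-δ) ≤ 1 / 4 :=
  calc (y - 1) * exp (-δ) ≤ (y - 1) * (y ^ 2)⁻¹ :=
        mul_le_mul_of_nonneg_left (exp_neg_lt_inv_sq (by linarith) hδ).le (by linarith)
    _ ≤ 1 / 4 := by
        rw [← div_eq_mul_inv, div_le_iff₀ (by positivity)]
        nlinarith [sq_nonneg (y - 2)]

lemma log_mul_exp_neg_lt_one {y δ : ℝ} (hy : 0 < y) (hδ : 2 * log y < δ) :
    log y * exp (-δ) < 1 := by
  rcases le_or_gt (log y) 0 with hlog | hlog
  · nlinarith [exp_pos (-δ)]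
  calc log y * exp (-δ) < log y * (y ^ 2)⁻¹ :=
        mul_lt_mul_of_pos_left (exp_neg_lt_inv_sq hy hδ) hlog
    _ < 1 := by
        rw [← div_eq_mul_inv, div_lt_one (by positivity)]
        nlinarith [log_le_sub_one_of_pos hy]

theorem statement16 (n : ℕ) (hn : 2 ≤ n) (δ : ℝ) (hδ : 2 * Real.log n < δ)
    (a b : Fin n → ℝ)
    (hagap : ∀ i j : Fin n, i < j → δ < a i - a j)
    (hbdec : ∀ i j : Fin n, i < j → b j < b i)
    (hab : δ < a ⟨0, by omega⟩ - b ⟨0, by omega⟩) :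
    δ / (1 + ((n : ℝ) - 1) * Real.exp (-δ)) < boltz a - boltz b ∧
      Real.log n ≤ δ / (1 + ((n : ℝ) - 1) * Real.exp (-δ)) ∧
      (Real.log n) ^ 2 * Real.exp (-(a ⟨0, by omega⟩ - b ⟨0, by omega⟩)) <
        boltz a - boltz b := by
  set i₀ : Fin n := ⟨0, by omega⟩
  set x := ((n : ℝ) - 1) * exp (-δ)
  have hN : (2 : ℝ) ≤ n := by exact_mod_cast hn
  have hlog : log 2 ≤ log n := log_le_log (by norm_num) hN
  have hx0 : 0 ≤ x := mul_nonneg (by linarith) (exp_pos _).le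
  have hx : x ≤ 1 / 4 := sub_one_mul_exp_neg_le_quarter (by linarith) hδ
  have h1x : 1 + x ≤ δ := by linarith [log_two_gt_d9]
  have hfirst : ∀ j ≠ i₀, i₀ < j := fun j hj => Nat.pos_of_ne_zero fun h => hj (Fin.ext h)
  have ha := sub_boltz_le a i₀ h1x fun j hj => (hagap i₀ j (hfirst j hj)).le
  have hb := boltz_le_of_forall_le b i₀ fun j =>
    (eq_or_ne j i₀).elim (fun h => h ▸ le_rfl) fun h => (hbdec i₀ j (hfirst j h)).le
  have hsplit : δ / (1 + x) = δ - δ * x / (1 + x) := by field_simp; ring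
  have hlow : log n ≤ δ / (1 + x) := by
    rw [le_div_iff₀ (by linarith)]
    nlinarith
  have hdiff : δ / (1 + x) < boltz a - boltz b := by linarith
  refine ⟨hdiff, hlow, ?_⟩
  calc log n ^ 2 * exp (-(a i₀ - b i₀)) = log n * (log n * exp (-(a i₀ - b i₀))) := by ring
    _ < log n * 1 := mul_lt_mul_of_pos_left
        (log_mul_exp_neg_lt_one (by linarith) (hδ.trans hab)) (log_pos (by linarith))
    _ < boltz a - boltz b := by linarith

end
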